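/- arXiv:2105.09407 — 6 statements merged into one kernel-verified Lean document; each statement's English description precedes it below -/
import Mathlib

section
/- Let $p > 0$ and let $\{\delta_k\}$ and $\{\gamma_k\}$ be sequences of non-negative numbers such that $\gamma_{k+1} \le \gamma_k (1 - \delta_k \gamma_k^p)$ for all $k \in \mathbb{N}$. Then $\gamma_k \le (\gamma_0^{-p} + p \sum_{i=1}^{k-1} \delta_i)^{-1/p}$ for all $k \in \mathbb{N}$. -/
/-!
Put `u k = γ k ^ (-p)`. Bernoulli's inequality for the exponent `-p`, `(1 - t) ^ (-p) ≥ 1 + p t`,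
applied with `t = δ k * γ k ^ p` turns the recursion into `u (k + 1) ≥ u k + p δ k` whenever
`γ (k + 1) > 0`. Hence `u k ≥ u 0 + p ∑_{i < k} δ i`, which is the claim with the extra term
`δ 0` in the sum.
-/

open Real Finset

lemma one_add_mul_le_one_sub_rpow_neg {p t : ℝ} (hp : 0 ≤ p) (ht : t < 1) :
    1 + p * t ≤ (1 - t) ^ (-p) := by
  have h1t : 0 < 1 - t := by linarith
  have hlog : log (1 - t) ≤ -t := by linarith [log_le_sub_one_of_pos h1t]
  calc 1 + p * t ≤ log (1 - t) * (-p) + 1 := by nlinarith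
    _ ≤ exp (log (1 - t) * (-p)) := add_one_le_exp _
    _ = (1 - t) ^ (-p) := (rpow_def_of_pos h1t _).symm

lemma rpow_neg_add_mul_le_rpow_neg {p δ x y : ℝ} (hp : 0 < p) (hx : 0 < x)
    (hy : 0 < y) (hyx : y ≤ x * (1 - δ * x ^ p)) :
    x ^ (-p) + p * δ ≤ y ^ (-p) := by
  have h1t : 0 < 1 - δ * x ^ p := pos_of_mul_pos_right (hy.trans_le hyx) hx.le
  have hxx : x ^ (-p) * x ^ p = 1 := by rw [← rpow_add hx, neg_add_cancel, rpow_zero]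
  calc x ^ (-p) + p * δ = x ^ (-p) * (1 + p * (δ * x ^ p)) := by
        linear_combination (-p * δ) * hxx
    _ ≤ x ^ (-p) * (1 - δ * x ^ p) ^ (-p) := by
        gcongr
        exact one_add_mul_le_one_sub_rpow_neg hp.le (by linarith)
    _ = (x * (1 - δ * x ^ p)) ^ (-p) := (mul_rpow hx.le h1t.le).symm
    _ ≤ y ^ (-p) := rpow_le_rpow_of_nonpos hy hyx (by linarith)

lemma le_rpow_neg_one_div_iff {p x S : ℝ} (hp : 0 < p) (hx : 0 < x) (hS : 0 < S) :
    x ≤ S ^ (-1 / p) ↔ S ≤ x ^ (-p) := by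
  rw [show -1 / p = (-p)⁻¹ by ring]
  exact le_rpow_inv_iff_of_neg hx hS (neg_neg_of_pos hp)

lemma le_rpow_neg_one_div_of_le_mul_one_sub_rpow {p : ℝ} (hp : 0 < p) {δ γ : ℕ → ℝ}
    (hδ : ∀ k, 0 ≤ δ k) (hγ : ∀ k, 0 ≤ γ k) (hγ0 : 0 < γ 0)
    (hrec : ∀ k, γ (k + 1) ≤ γ k * (1 - δ k * γ k ^ p)) (k : ℕ) :
    γ k ≤ (γ 0 ^ (-p) + p * ∑ i ∈ range k, δ i) ^ (-1 / p) := by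
  have hS : ∀ k, 0 < γ 0 ^ (-p) + p * ∑ i ∈ range k, δ i := fun k => by
    have := rpow_pos_of_pos hγ0 (-p)
    have := sum_nonneg fun i (_ : i ∈ range k) => hδ i
    positivity
  induction k with
  | zero => exact (le_rpow_neg_one_div_iff hp hγ0 (hS 0)).2 (by simp)
  | succ k ih =>
    rcases le_or_gt (γ (k + 1)) 0 with hnonpos | hpos
    · exact hnonpos.trans (rpow_pos_of_pos (hS _) _).le
    have hγk : 0 < γ k :=
      (hγ k).lt_of_ne' fun h0 => by simpa [h0] using hpos.trans_le (hrec k)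
    rw [le_rpow_neg_one_div_iff hp hγk (hS k)] at ih
    rw [le_rpow_neg_one_div_iff hp hpos (hS _), sum_range_succ, mul_add, ← add_assoc]
    exact (add_le_add_left ih _).trans
      (rpow_neg_add_mul_le_rpow_neg hp hγk hpos (hrec k))

theorem stmt_2 (p : ℝ) (hp : 0 < p) (δ γ : ℕ → ℝ)
    (hδ : ∀ k, 0 ≤ δ k) (hγ : ∀ k, 0 ≤ γ k) (hγ0 : 0 < γ 0)
    (hrec : ∀ k, γ (k + 1) ≤ γ k * (1 - δ k * γ k ^ p)) :
    ∀ k, γ k ≤ (γ 0 ^ (-p) + p * ∑ i ∈ Finset.Ico 1 k, δ i) ^ (-(1 : ℝ) / p) := by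
  intro k
  have hsub : ∑ i ∈ Ico 1 k, δ i ≤ ∑ i ∈ range k, δ i :=
    sum_le_sum_of_subset_of_nonneg
      (by rw [range_eq_Ico]; exact Ico_subset_Ico_left zero_le_one)
      fun i _ _ => hδ i
  have hpos : 0 < γ 0 ^ (-p) + p * ∑ i ∈ Ico 1 k, δ i := by
    have := rpow_pos_of_pos hγ0 (-p)
    have := sum_nonneg fun i (_ : i ∈ Ico 1 k) => hδ i
    positivity
  refine (le_rpow_neg_one_div_of_le_mul_one_sub_rpow hp hδ hγ hγ0 hrec k).trans ?_
  exact rpow_le_rpow_of_nonpos hpos (by gcongr) (div_nonpos_of_nonpos_of_nonneg (by norm_num) hp.le)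
end

section
/- Let $f_1 : \mathbb{R}^n \to \mathbb{R}$ be convex and differentiable with $L_{f_1}$-Lipschitz gradient, $g_1$ proper lower semicontinuous convex, $\varphi_1 = f_1 + g_1$, and $T_t(x) = \mathrm{prox}_{t g_1}(x - t\nabla f_1(x))$ for $t \in (0, 1/L_{f_1}]$. Then for every $x \in \mathrm{dom}(\partial\varphi_1)$ one has $\|x - T_t(x)\| \le t \, d(0, \partial\varphi_1(x))$, where $d(0, \partial\varphi_1(x))$ is the minimal norm of a subgradient of $\varphi_1$ at $x$. -/
/-! Write `p = T_t x`, `w = x - t ∇f₁ x` and `d = x - p`. Minimality of `p` along the segment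
towards `x`, together with convexity of `g₁`, gives the optimality condition
`t (g₁ p - g₁ x) ≤ ⟪p - w, x - p⟫ = t ⟪∇f₁ x, d⟫ - ‖d‖²`; a subgradient `z` of `φ₁` at `x`,
compared along the segment towards `p`, gives `g₁ x - g₁ p ≤ ⟪z - ∇f₁ x, d⟫`. Adding `t` times
the second to the first leaves `‖d‖² ≤ t ⟪z, d⟫ ≤ t ‖z‖ ‖d‖`. -/

open Set Filter Topology
open scoped RealInnerProductSpace

theorem EReal.exists_eq_coe_of_ne_bot_of_ne_top {e : EReal} (hb : e ≠ ⊥) (ht : e ≠ ⊤) :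
    ∃ r : ℝ, e = r :=
  ⟨e.toReal, (EReal.coe_toReal ht hb).symm⟩

theorem le_apply_of_forall_mul_le_sub {E : Type*} [NormedAddCommGroup E] [NormedSpace ℝ E]
    {f : E → ℝ} {f' : E →L[ℝ] ℝ} {x v : E} {a : ℝ} (hf : HasFDerivAt f f' x)
    (h : ∀ s ∈ Ioo (0 : ℝ) 1, s * a ≤ f (x + s • v) - f x) : a ≤ f' v := by
  have hline : HasDerivAt (fun s : ℝ => f (x + s • v)) (f' v) 0 := by
    have hx : HasFDerivAt f f' (x + (0 : ℝ) • v) := by simpa using hf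
    exact hx.comp_hasDerivAt 0 (by simpa using ((hasDerivAt_id (0 : ℝ)).smul_const v).const_add x)
  refine ge_of_tendsto hline.tendsto_slope_zero_right ?_
  filter_upwards [Ioo_mem_nhdsGT (zero_lt_one' ℝ)] with s hs
  rw [zero_add, zero_smul, add_zero, smul_eq_mul, ← div_eq_inv_mul, le_div_iff₀ hs.1, mul_comm]
  exact h s hs

def ConvexEReal {E : Type*} [AddCommGroup E] [Module ℝ E] (g : E → EReal) : Prop :=
  ∀ x y, ∀ a b : ℝ, 0 ≤ a → 0 ≤ b → a + b = 1 →
    g (a • x + b • y) ≤ (a : EReal) * g x + (b : EReal) * g y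

theorem ConvexEReal.exists_coe_le {E : Type*} [AddCommGroup E] [Module ℝ E] {g : E → EReal}
    (hconv : ConvexEReal g) (hbot : ∀ x, g x ≠ ⊥) {x y : E} {a b s : ℝ} (hx : g x = a)
    (hy : g y = b) (hs₀ : 0 ≤ s) (hs₁ : s ≤ 1) :
    ∃ c : ℝ, g (x + s • (y - x)) = c ∧ c ≤ a + s * (b - a) := by
  have hle := hconv x y (1 - s) s (by linarith) hs₀ (by ring)
  rw [hx, hy, ← EReal.coe_mul, ← EReal.coe_mul, ← EReal.coe_add,
    show (1 - s) • x + s • y = x + s • (y - x) by module] at hle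
  obtain ⟨c, hc⟩ := EReal.exists_eq_coe_of_ne_bot_of_ne_top (hbot _)
    (ne_top_of_le_ne_top (EReal.coe_ne_top _) hle)
  rw [hc, EReal.coe_le_coe_iff] at hle
  exact ⟨c, hc, by linarith⟩

/-- First-order optimality for minimizing `t • g + f` over the points where `g` is finite:
`-f' / t` is a subgradient of `g` at the minimizer. -/
theorem ConvexEReal.mul_sub_le_apply_of_forall_le {E : Type*} [NormedAddCommGroup E]
    [NormedSpace ℝ E] {g : E → EReal} (hconv : ConvexEReal g) (hbot : ∀ x, g x ≠ ⊥)
    {f : E → ℝ} {f' : E →L[ℝ] ℝ} {x y : E} {t a b : ℝ} (ht : 0 ≤ t) (hf : HasFDerivAt f f' x)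
    (hx : g x = a) (hy : g y = b) (hmin : ∀ u (c : ℝ), g u = c → t * a + f x ≤ t * c + f u) :
    t * (a - b) ≤ f' (y - x) := by
  refine le_apply_of_forall_mul_le_sub hf fun s hs => ?_
  obtain ⟨c, hc, hcle⟩ := hconv.exists_coe_le hbot hx hy hs.1.le hs.2.le
  have := hmin _ c hc
  nlinarith [mul_le_mul_of_nonneg_left hcle ht]

section

variable {E : Type*} [NormedAddCommGroup E] {g : E → EReal}

def IsProxPoint (g : E → EReal) (t : ℝ) (w p : E) : Prop :=
  ∀ u, (t : EReal) * g p + ((‖p - w‖ ^ 2 / 2 : ℝ) : EReal)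
    ≤ (t : EReal) * g u + ((‖u - w‖ ^ 2 / 2 : ℝ) : EReal)

theorem IsProxPoint.ne_top {t : ℝ} {w p u : E} (hp : IsProxPoint g t w p) (ht : 0 < t) {a : ℝ}
    (hu : g u = a) : g p ≠ ⊤ := by
  intro htop
  simpa [htop, hu, EReal.coe_mul_top_of_pos ht, ← EReal.coe_mul, ← EReal.coe_add] using hp u

variable [InnerProductSpace ℝ E]

theorem IsProxPoint.mul_sub_le_inner (hconv : ConvexEReal g) (hbot : ∀ x, g x ≠ ⊥) {t a b : ℝ}
    {w p u : E} (hp : IsProxPoint g t w p) (ht : 0 ≤ t) (hgp : g p = a) (hgu : g u = b) :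
    t * (a - b) ≤ ⟪p - w, u - p⟫ := by
  have hq := ((hasFDerivAt_id p).sub_const w).norm_sq.mul_const (2⁻¹ : ℝ)
  refine (hconv.mul_sub_le_apply_of_forall_le hbot ht hq hgp hgu fun v c hc => ?_).trans_eq ?_
  · have := hp v
    rw [hgp, hc] at this
    exact_mod_cast this
  · simp [inner_sub_left]

def HasSubgradientAt (φ : E → EReal) (z x : E) : Prop :=
  ∀ y, φ x + ((⟪z, y - x⟫ : ℝ) : EReal) ≤ φ y

theorem HasSubgradientAt.ne_top {φ : E → EReal} {z x y : E} (hz : HasSubgradientAt φ z x)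
    (hy : φ y ≠ ⊤) : φ x ≠ ⊤ := by
  intro htop
  exact hy (by simpa [htop] using hz y)

theorem HasSubgradientAt.sub_le_apply_sub_inner_of_add {f : E → ℝ} {f' : E →L[ℝ] ℝ}
    (hconv : ConvexEReal g) (hbot : ∀ x, g x ≠ ⊥) {x y z : E} {a b : ℝ}
    (hz : HasSubgradientAt (fun u => (f u : EReal) + g u) z x) (hf : HasFDerivAt f f' x)
    (hx : g x = a) (hy : g y = b) : a - b ≤ f' (y - x) - ⟪z, y - x⟫ := by
  have hl := hf.sub ((hasFDerivAt_const z x).inner ℝ ((hasFDerivAt_id x).sub_const x))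
  refine (le_of_eq_of_le (one_mul _).symm (hconv.mul_sub_le_apply_of_forall_le hbot zero_le_one
    hl hx hy fun u c hc => ?_)).trans_eq ?_
  · have : (f x : EReal) + a + ⟪z, u - x⟫ ≤ f u + c := hx ▸ hc ▸ hz u
    norm_cast at this
    simp only [Pi.sub_apply, id, one_mul, sub_self, inner_zero_right, sub_zero]
    linarith
  · simp

theorem norm_le_mul_of_sq_le_inner {d z : E} {t : ℝ} (ht : 0 ≤ t) (h : ‖d‖ ^ 2 ≤ t * ⟪z, d⟫) :
    ‖d‖ ≤ t * ‖z‖ := by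
  rcases (norm_nonneg d).eq_or_lt with hd | hd
  · rw [← hd]; positivity
  · have := mul_le_mul_of_nonneg_left (real_inner_le_norm z d) ht
    nlinarith

end

theorem stmt_10_general (n : ℕ) (f₁ : EuclideanSpace ℝ (Fin n) → ℝ)
    (gradf₁ : EuclideanSpace ℝ (Fin n) → EuclideanSpace ℝ (Fin n))
    (g₁ : EuclideanSpace ℝ (Fin n) → EReal)
    (Lf t : ℝ)
    (hgrad : ∀ x, HasGradientAt f₁ (gradf₁ x) x)
    (hgproper : (∀ x, g₁ x ≠ ⊥) ∧ ∃ x, g₁ x ≠ ⊤)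
    (hgconv : ∀ x y, ∀ a b : ℝ, 0 ≤ a → 0 ≤ b → a + b = 1 →
      g₁ (a • x + b • y) ≤ (a : EReal) * g₁ x + (b : EReal) * g₁ y)
    (ht : t ∈ Set.Ioc (0 : ℝ) (1 / Lf))
    (Tt : EuclideanSpace ℝ (Fin n) → EuclideanSpace ℝ (Fin n))
    -- Tt x is the proximal point of t•g₁ at x - t∇f₁(x):
    (hTt : ∀ x u, (t : EReal) * g₁ (Tt x) + ((‖Tt x - (x - t • gradf₁ x)‖ ^ 2 / 2 : ℝ) : EReal)
      ≤ (t : EReal) * g₁ u + ((‖u - (x - t • gradf₁ x)‖ ^ 2 / 2 : ℝ) : EReal))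
    -- φ₁ = f₁ + g₁ and its convex subdifferential at x:
    (x : EuclideanSpace ℝ (Fin n))
    (hdom : Set.Nonempty {z : EuclideanSpace ℝ (Fin n) |
      ∀ y, ((f₁ x : EReal) + g₁ x) + ((inner ℝ z (y - x) : ℝ) : EReal) ≤ (f₁ y : EReal) + g₁ y}) :
    ‖x - Tt x‖ ≤ t * Metric.infDist 0 {z : EuclideanSpace ℝ (Fin n) |
      ∀ y, ((f₁ x : EReal) + g₁ x) + ((inner ℝ z (y - x) : ℝ) : EReal) ≤ (f₁ y : EReal) + g₁ y} := by
  obtain ⟨ht, -⟩ := ht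
  obtain ⟨hbot, y₀, hy₀⟩ := hgproper
  have hprox : IsProxPoint g₁ t (x - t • gradf₁ x) (Tt x) := hTt x
  obtain ⟨z₀, hz₀ : HasSubgradientAt (fun y => (f₁ y : EReal) + g₁ y) z₀ x⟩ := id hdom
  obtain ⟨a, ha⟩ := EReal.exists_eq_coe_of_ne_bot_of_ne_top (hbot x) <|
    (EReal.add_ne_top_iff_ne_top_right (EReal.coe_ne_bot _) (EReal.coe_ne_top _)).1 <|
    hz₀.ne_top (EReal.add_ne_top (EReal.coe_ne_top _) hy₀)
  obtain ⟨b, hb⟩ := EReal.exists_eq_coe_of_ne_bot_of_ne_top (hbot _) (hprox.ne_top ht ha)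
  have hopt := hprox.mul_sub_le_inner hgconv hbot ht.le hb ha
  rw [← div_le_iff₀' ht, Metric.le_infDist hdom]
  intro z hz
  rw [dist_zero_left, div_le_iff₀' ht]
  refine norm_le_mul_of_sq_le_inner ht.le ?_
  have hsub := mul_le_mul_of_nonneg_left
    (HasSubgradientAt.sub_le_apply_sub_inner_of_add hgconv hbot hz (hgrad x).hasFDerivAt ha hb) ht.le
  rw [show Tt x - (x - t • gradf₁ x) = t • gradf₁ x - (x - Tt x) by module,
    inner_sub_left, real_inner_smul_left, real_inner_self_eq_norm_sq] at hopt
  rw [InnerProductSpace.toDual_apply_apply, show Tt x - x = -(x - Tt x) by abel, inner_neg_right,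
    inner_neg_right] at hsub
  linarith

theorem stmt_10 (n : ℕ) (f₁ : EuclideanSpace ℝ (Fin n) → ℝ)
    (gradf₁ : EuclideanSpace ℝ (Fin n) → EuclideanSpace ℝ (Fin n))
    (g₁ : EuclideanSpace ℝ (Fin n) → EReal)
    (Lf t : ℝ) (hLf : 0 < Lf)
    (hfconv : ConvexOn ℝ Set.univ f₁)
    (hgrad : ∀ x, HasGradientAt f₁ (gradf₁ x) x)
    (hflip : ∀ x y, ‖gradf₁ x - gradf₁ y‖ ≤ Lf * ‖x - y‖)
    (hgproper : (∀ x, g₁ x ≠ ⊥) ∧ ∃ x, g₁ x ≠ ⊤)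
    (hglsc : LowerSemicontinuous g₁)
    (hgconv : ∀ x y, ∀ a b : ℝ, 0 ≤ a → 0 ≤ b → a + b = 1 →
      g₁ (a • x + b • y) ≤ (a : EReal) * g₁ x + (b : EReal) * g₁ y)
    (ht : t ∈ Set.Ioc (0 : ℝ) (1 / Lf))
    (Tt : EuclideanSpace ℝ (Fin n) → EuclideanSpace ℝ (Fin n))
    -- Tt x is the proximal point of t•g₁ at x - t∇f₁(x):
    (hTt : ∀ x u, (t : EReal) * g₁ (Tt x) + ((‖Tt x - (x - t • gradf₁ x)‖ ^ 2 / 2 : ℝ) : EReal)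
      ≤ (t : EReal) * g₁ u + ((‖u - (x - t • gradf₁ x)‖ ^ 2 / 2 : ℝ) : EReal))
    -- φ₁ = f₁ + g₁ and its convex subdifferential at x:
    (x : EuclideanSpace ℝ (Fin n))
    (hdom : Set.Nonempty {z : EuclideanSpace ℝ (Fin n) |
      ∀ y, ((f₁ x : EReal) + g₁ x) + ((inner ℝ z (y - x) : ℝ) : EReal) ≤ (f₁ y : EReal) + g₁ y}) :
    ‖x - Tt x‖ ≤ t * Metric.infDist 0 {z : EuclideanSpace ℝ (Fin n) |
      ∀ y, ((f₁ x : EReal) + g₁ x) + ((inner ℝ z (y - x) : ℝ) : EReal) ≤ (f₁ y : EReal) + g₁ y} :=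
  stmt_10_general n f₁ gradf₁ g₁ Lf t hgrad hgproper hgconv ht Tt hTt x hdom
end

section
/- Let $f : \mathbb{R}^n \to \mathbb{R}$ be convex and differentiable with $L_f$-Lipschitz gradient, $g$ proper lower semicontinuous convex, $\phi = f + g$, and for $t \in (0, 1/L_f]$ define $\psi(x) = \frac{1}{t}(x - \mathrm{prox}_{tg}(x - t\nabla f(x)))$. Then $\phi(x - t\psi(x)) - \phi(y) \le \frac{1}{2t}\|x - y\|^2$ for all $x, y \in \mathbb{R}^n$. -/
/-!
Write `z = x - t∇f(x)` and `p = prox_{tg}(z) = x - tψ(x)`. Expanding the squares around `x`, the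
prox inequality for `p` against the competitor `y` reads
`t g(p) + t⟪∇f(x), p - x⟫ + ½‖p - x‖² ≤ t g(y) + t⟪∇f(x), y - x⟫ + ½‖y - x‖²`.
The descent lemma bounds `f(p)` by `f(x) + ⟪∇f(x), p - x⟫ + (L/2)‖p - x‖²`, and since `tL ≤ 1`
the quadratic term is absorbed by `½‖p - x‖²`; the gradient inequality of convexity then
replaces `f(x) + ⟪∇f(x), y - x⟫` by `f(y)`.
-/

open scoped RealInnerProductSpace

section ProximalGradient

variable {E : Type*} [NormedAddCommGroup E] [InnerProductSpace ℝ E] {gradf : E → E} {L t : ℝ}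

theorem norm_sub_sub_smul_sq (u x v : E) (t : ℝ) :
    ‖u - (x - t • v)‖ ^ 2 = ‖u - x‖ ^ 2 + 2 * t * ⟪v, u - x⟫ + t ^ 2 * ‖v‖ ^ 2 := by
  rw [show u - (x - t • v) = (u - x) + t • v by abel, norm_add_sq_real, real_inner_smul_right,
    norm_smul, Real.norm_eq_abs, mul_pow, sq_abs, real_inner_comm]
  ring

theorem inner_gradient_sub_le_of_lipschitz
    (hlip : ∀ x y, ‖gradf x - gradf y‖ ≤ L * ‖x - y‖) (x d : E) {s : ℝ} (hs : 0 ≤ s) :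
    ⟪gradf (x + s • d) - gradf x, d⟫ ≤ L * s * ‖d‖ ^ 2 :=
  calc ⟪gradf (x + s • d) - gradf x, d⟫
      ≤ ‖gradf (x + s • d) - gradf x‖ * ‖d‖ := real_inner_le_norm _ _
    _ ≤ L * ‖x + s • d - x‖ * ‖d‖ := by gcongr; exact hlip _ _
    _ = L * s * ‖d‖ ^ 2 := by
      rw [add_sub_cancel_left, norm_smul, Real.norm_of_nonneg hs]; ring

variable [CompleteSpace E] {f : E → ℝ}

theorem HasGradientAt.hasDerivAt_comp_add_smul {f' x d : E} {s : ℝ}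
    (hf : HasGradientAt f f' (x + s • d)) :
    HasDerivAt (fun s : ℝ => f (x + s • d)) ⟪f', d⟫ s := by
  have hline : HasDerivAt (fun s : ℝ => x + s • d) d s := by
    simpa using ((hasDerivAt_id s).smul_const d).const_add x
  simpa [InnerProductSpace.toDual_apply_apply, Function.comp_def] using
    hf.hasFDerivAt.comp_hasDerivAt s hline

theorem ConvexOn.add_inner_le_of_hasGradientAt (hf : ConvexOn ℝ Set.univ f) {f' x : E}
    (hx : HasGradientAt f f' x) (y : E) :
    f x + ⟪f', y - x⟫ ≤ f y := by
  have hline : (fun s : ℝ => f (x + s • (y - x))) = f ∘ AffineMap.lineMap x y := by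
    funext s
    simp [AffineMap.lineMap_apply, add_comm]
  have hconv : ConvexOn ℝ Set.univ (fun s : ℝ => f (x + s • (y - x))) := by
    simpa [hline] using hf.comp_affineMap (AffineMap.lineMap x y)
  have hderiv : HasDerivAt (fun s : ℝ => f (x + s • (y - x))) ⟪f', y - x⟫ 0 :=
    HasGradientAt.hasDerivAt_comp_add_smul (by simpa using hx)
  have hslope := hconv.le_slope_of_hasDerivWithinAt_Ioi (Set.mem_univ 0) (Set.mem_univ 1)
    one_pos hderiv.hasDerivWithinAt
  simp only [slope_def_field, zero_smul, add_zero, one_smul, add_sub_cancel, sub_zero,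
    div_one] at hslope
  linarith

theorem le_add_inner_add_sq_of_lipschitz_gradient (hgrad : ∀ x, HasGradientAt f (gradf x) x)
    (hlip : ∀ x y, ‖gradf x - gradf y‖ ≤ L * ‖x - y‖) (x y : E) :
    f y ≤ f x + ⟪gradf x, y - x⟫ + L / 2 * ‖y - x‖ ^ 2 := by
  set d := y - x
  set χ : ℝ → ℝ := fun s => f (x + s • d) - s * ⟪gradf x, d⟫ - L * ‖d‖ ^ 2 / 2 * s ^ 2
  have hχ : ∀ s : ℝ, HasDerivAt χ (⟪gradf (x + s • d) - gradf x, d⟫ - L * ‖d‖ ^ 2 * s) s := by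
    intro s
    have hquad := (hasDerivAt_pow 2 s).const_mul (L * ‖d‖ ^ 2 / 2)
    refine ((((hgrad _).hasDerivAt_comp_add_smul).sub
      (hasDerivAt_mul_const ⟪gradf x, d⟫)).sub hquad).congr_deriv ?_
    rw [inner_sub_left]; push_cast; ring
  have hanti : AntitoneOn χ (Set.Icc 0 1) := by
    refine antitoneOn_of_deriv_nonpos (convex_Icc 0 1)
      (fun s _ => (hχ s).continuousAt.continuousWithinAt)
      (fun s _ => (hχ s).differentiableAt.differentiableWithinAt) fun s hs => ?_
    rw [interior_Icc] at hs
    rw [(hχ s).deriv]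
    linarith [inner_gradient_sub_le_of_lipschitz hlip x d hs.1.le]
  have h01 := hanti (Set.left_mem_Icc.2 zero_le_one) (Set.right_mem_Icc.2 zero_le_one)
    zero_le_one
  simp only [χ, d, zero_smul, add_zero, one_smul, add_sub_cancel, zero_mul, sub_zero,
    one_mul, ne_eq, OfNat.ofNat_ne_zero, not_false_eq_true, zero_pow, mul_zero, one_pow,
    mul_one] at h01
  linarith

theorem add_le_add_add_sq_of_prox_gradient_step (hf : ConvexOn ℝ Set.univ f)
    (hgrad : ∀ x, HasGradientAt f (gradf x) x)
    (hlip : ∀ x y, ‖gradf x - gradf y‖ ≤ L * ‖x - y‖) (ht : 0 < t) (htL : t * L ≤ 1)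
    {x y p : E} {gp gy : ℝ}
    (hprox : t * gp + ‖p - (x - t • gradf x)‖ ^ 2 / 2 ≤ t * gy + ‖y - (x - t • gradf x)‖ ^ 2 / 2) :
    f p + gp ≤ f y + gy + 1 / (2 * t) * ‖x - y‖ ^ 2 := by
  rw [norm_sub_sub_smul_sq, norm_sub_sub_smul_sq] at hprox
  have hconv := hf.add_inner_le_of_hasGradientAt (hgrad x) y
  have hdesc := le_add_inner_add_sq_of_lipschitz_gradient hgrad hlip x p
  have habsorb : t * L * ‖p - x‖ ^ 2 ≤ ‖p - x‖ ^ 2 :=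
    mul_le_of_le_one_left (sq_nonneg _) htL
  have key : t * (f p + gp) ≤ t * (f y + gy) + ‖y - x‖ ^ 2 / 2 := by
    linarith [mul_le_mul_of_nonneg_left hdesc ht.le, mul_le_mul_of_nonneg_left hconv ht.le]
  rw [norm_sub_rev, ← sub_le_iff_le_add', one_div_mul_eq_div, le_div_iff₀ (by positivity)]
  linarith

end ProximalGradient

theorem stmt_11_general (n : ℕ) (f : EuclideanSpace ℝ (Fin n) → ℝ)
    (gradf : EuclideanSpace ℝ (Fin n) → EuclideanSpace ℝ (Fin n))
    (g : EuclideanSpace ℝ (Fin n) → EReal)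
    (Lf t : ℝ)
    (hfconv : ConvexOn ℝ Set.univ f)
    (hgrad : ∀ x, HasGradientAt f (gradf x) x)
    (hflip : ∀ x y, ‖gradf x - gradf y‖ ≤ Lf * ‖x - y‖)
    (hgproper : (∀ x, g x ≠ ⊥) ∧ ∃ x, g x ≠ ⊤)
    (ht : t ∈ Set.Ioc (0 : ℝ) (1 / Lf))
    (prox : EuclideanSpace ℝ (Fin n) → EuclideanSpace ℝ (Fin n))
    -- prox x is the proximal point of t•g at x - t∇f(x), so that x - t•ψ(x) = prox x:
    (hprox : ∀ x u, (t : EReal) * g (prox x) + ((‖prox x - (x - t • gradf x)‖ ^ 2 / 2 : ℝ) : EReal)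
      ≤ (t : EReal) * g u + ((‖u - (x - t • gradf x)‖ ^ 2 / 2 : ℝ) : EReal))
    (ψ : EuclideanSpace ℝ (Fin n) → EuclideanSpace ℝ (Fin n))
    (hψ : ∀ x, ψ x = (1 / t) • (x - prox x)) :
    ∀ x y, (f (x - t • ψ x) : EReal) + g (x - t • ψ x)
      ≤ ((f y : EReal) + g y) + ((1 / (2 * t) * ‖x - y‖ ^ 2 : ℝ) : EReal) := by
  intro x y
  obtain ⟨htpos, htLf⟩ := ht
  have htL : t * Lf ≤ 1 := by
    rwa [le_div_iff₀ (one_div_pos.mp (htpos.trans_le htLf))] at htLf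
  have hstep : x - t • ψ x = prox x := by
    rw [hψ, smul_smul, mul_one_div_cancel htpos.ne', one_smul, sub_sub_cancel]
  rw [hstep]
  have hpr := hprox x y
  have hgp := hgproper.1 (prox x)
  have hgy := hgproper.1 y
  generalize g (prox x) = gp at hpr hgp ⊢
  generalize g y = gy at hpr hgy ⊢
  induction gy with
  | bot => exact absurd rfl hgy
  | top =>
    rw [EReal.add_top_of_ne_bot (EReal.coe_ne_bot _), EReal.top_add_of_ne_bot (EReal.coe_ne_bot _)]
    exact le_top
  | coe b =>
    induction gp with
    | bot => exact absurd rfl hgp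
    | top =>
      rw [EReal.coe_mul_top_of_pos htpos, EReal.top_add_of_ne_bot (EReal.coe_ne_bot _),
        top_le_iff] at hpr
      exact absurd hpr (mod_cast EReal.coe_ne_top _)
    | coe a =>
      norm_cast at hpr ⊢
      exact add_le_add_add_sq_of_prox_gradient_step hfconv hgrad hflip htpos htL hpr

theorem stmt_11 (n : ℕ) (f : EuclideanSpace ℝ (Fin n) → ℝ)
    (gradf : EuclideanSpace ℝ (Fin n) → EuclideanSpace ℝ (Fin n))
    (g : EuclideanSpace ℝ (Fin n) → EReal)
    (Lf t : ℝ) (hLf : 0 < Lf)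
    (hfconv : ConvexOn ℝ Set.univ f)
    (hgrad : ∀ x, HasGradientAt f (gradf x) x)
    (hflip : ∀ x y, ‖gradf x - gradf y‖ ≤ Lf * ‖x - y‖)
    (hgproper : (∀ x, g x ≠ ⊥) ∧ ∃ x, g x ≠ ⊤)
    (hglsc : LowerSemicontinuous g)
    (hgconv : ∀ x y, ∀ a b : ℝ, 0 ≤ a → 0 ≤ b → a + b = 1 →
      g (a • x + b • y) ≤ (a : EReal) * g x + (b : EReal) * g y)
    (ht : t ∈ Set.Ioc (0 : ℝ) (1 / Lf))
    (prox : EuclideanSpace ℝ (Fin n) → EuclideanSpace ℝ (Fin n))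
    -- prox x is the proximal point of t•g at x - t∇f(x), so that x - t•ψ(x) = prox x:
    (hprox : ∀ x u, (t : EReal) * g (prox x) + ((‖prox x - (x - t • gradf x)‖ ^ 2 / 2 : ℝ) : EReal)
      ≤ (t : EReal) * g u + ((‖u - (x - t • gradf x)‖ ^ 2 / 2 : ℝ) : EReal))
    (ψ : EuclideanSpace ℝ (Fin n) → EuclideanSpace ℝ (Fin n))
    (hψ : ∀ x, ψ x = (1 / t) • (x - prox x)) :
    ∀ x y, (f (x - t • ψ x) : EReal) + g (x - t • ψ x)
      ≤ ((f y : EReal) + g y) + ((1 / (2 * t) * ‖x - y‖ ^ 2 : ℝ) : EReal) :=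
  stmt_11_general n f gradf g Lf t hfconv hgrad hflip hgproper ht prox hprox ψ hψ
end

section
/- Let $f : \mathbb{R}^n \to \mathbb{R}$ be convex with $L_f$-Lipschitz gradient, $g$ proper lower semicontinuous convex, $\phi = f + g$, $t \in (0, 1/L_f]$, and $x^+ = \mathrm{prox}_{tg}(x - t\nabla f(x))$. Then for every $u \in \mathbb{R}^n$: $\phi(x^+) - \phi(u) \le \frac{1}{t}\langle x - x^+, x - u\rangle - \frac{1}{2t}\|x - x^+\|^2$. -/
/-!
Three inequalities add up to the claim. With `y = x - t∇f(x)`, the optimality of `x⁺` for the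
prox problem, tested along the segment from `x⁺` to `u`, gives the variational inequality
`t g(x⁺) ≤ t g(u) + ⟪x⁺ - y, u - x⁺⟫`; the descent lemma bounds `f(x⁺)` by the quadratic model
of `f` at `x`, whose curvature `L_f` is at most `1/t`; and convexity puts `f(u)` above the tangent
of `f` at `x`. The extended-real `g` is a real convex function on its effective domain `{g ≠ ⊤}`,
and the claim is trivial for `u` outside it.
-/

open Set Filter Topology AffineMap
open scoped RealInnerProductSpace

section Gradient

variable {E : Type*} [NormedAddCommGroup E] [InnerProductSpace ℝ E] [CompleteSpace E]
  {f : E → ℝ} {f' : E → E}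

theorem HasGradientAt.hasDerivAt_comp_lineMap {a b : E} {s : ℝ} {g : E}
    (h : HasGradientAt f g (lineMap a b s)) :
    HasDerivAt (fun s : ℝ => f (lineMap a b s)) ⟪g, b - a⟫ s :=
  h.hasFDerivAt.comp_hasDerivAt s hasDerivAt_lineMap

theorem ConvexOn.add_inner_gradient_le (hf : ConvexOn ℝ univ f) {g a : E}
    (hfa : HasGradientAt f g a) (u : E) : f a + ⟪g, u - a⟫ ≤ f u := by
  have hline : ConvexOn ℝ univ (fun s : ℝ => f (lineMap a u s)) :=
    hf.comp_affineMap (lineMap a u)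
  have hderiv := (lineMap_apply_zero a u (k := ℝ) ▸ hfa).hasDerivAt_comp_lineMap
  have := hline.le_slope_of_hasDerivAt (mem_univ 0) (mem_univ 1) zero_lt_one hderiv
  simp only [slope_def_field, lineMap_apply_zero, lineMap_apply_one, sub_zero, div_one] at this
  linarith

theorem le_add_inner_gradient_add_sq_of_lipschitz (hf : ∀ x, HasGradientAt f (f' x) x) {L : ℝ}
    (hL : ∀ x y, ‖f' x - f' y‖ ≤ L * ‖x - y‖) (a y : E) :
    f y ≤ f a + ⟪f' a, y - a⟫ + L / 2 * ‖y - a‖ ^ 2 := by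
  have hderiv (s : ℝ) := (hf (lineMap a y s)).hasDerivAt_comp_lineMap (s := s)
  have hB (s : ℝ) : HasDerivAt (fun s : ℝ => f a + s * ⟪f' a, y - a⟫ + L / 2 * ‖y - a‖ ^ 2 * s ^ 2)
      (⟪f' a, y - a⟫ + L * ‖y - a‖ ^ 2 * s) s := by
    refine (((hasDerivAt_mul_const ⟪f' a, y - a⟫).const_add (f a)).add
      ((hasDerivAt_pow 2 s).const_mul (L / 2 * ‖y - a‖ ^ 2))).congr_deriv ?_
    norm_num; ring
  have := image_le_of_deriv_right_le_deriv_boundary (a := 0) (b := 1)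
    (fun s _ => (hderiv s).continuousAt.continuousWithinAt)
    (fun s _ => (hderiv s).hasDerivWithinAt) (by simp)
    (fun s _ => (hB s).continuousAt.continuousWithinAt) (fun s _ => (hB s).hasDerivWithinAt)
    (fun s hs => ?_) (right_mem_Icc.2 zero_le_one)
  · simpa using this
  calc ⟪f' (lineMap a y s), y - a⟫ = ⟪f' a, y - a⟫ + ⟪f' (lineMap a y s) - f' a, y - a⟫ := by
        rw [inner_sub_left]; ring
    _ ≤ ⟪f' a, y - a⟫ + ‖f' (lineMap a y s) - f' a‖ * ‖y - a‖ := by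
        gcongr; exact real_inner_le_norm _ _
    _ ≤ ⟪f' a, y - a⟫ + L * ‖lineMap a y s - a‖ * ‖y - a‖ := by
        gcongr; exact hL _ _
    _ = ⟪f' a, y - a⟫ + L * ‖y - a‖ ^ 2 * s := by
        rw [← dist_eq_norm, dist_lineMap_left, dist_eq_norm', Real.norm_of_nonneg hs.1]; ring

end Gradient

theorem le_of_forall_mem_Ioc_le_add_mul {a b c : ℝ} (hle : ∀ l ∈ Ioc (0 : ℝ) 1, a ≤ b + l * c) :
    a ≤ b := by
  have hlim : Tendsto (fun l : ℝ => b + l * c) (𝓝[>] 0) (𝓝 b) := by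
    simpa using ((continuous_id.mul continuous_const).const_add b).continuousWithinAt
      (s := Ioi 0) (x := 0) |>.tendsto
  exact ge_of_tendsto hlim (mem_of_superset (Ioc_mem_nhdsGT zero_lt_one) hle)

section Prox

variable {E : Type*} [NormedAddCommGroup E] [InnerProductSpace ℝ E] {S : Set E} {h : E → ℝ}

theorem ConvexOn.le_add_inner_of_isMinOn (hh : ConvexOn ℝ S h) {y p u : E} (hp : p ∈ S)
    (hmin : IsMinOn (fun z => h z + ‖z - y‖ ^ 2 / 2) S p) (hu : u ∈ S) :
    h p ≤ h u + ⟪p - y, u - p⟫ := by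
  refine le_of_forall_mem_Ioc_le_add_mul (c := ‖u - p‖ ^ 2 / 2) fun l ⟨hl0, hl1⟩ => ?_
  have hcomb : (1 - l) • p + l • u = (p - y) + l • (u - p) + y := by module
  have hconv := hh.2 hp hu (sub_nonneg.2 hl1) hl0.le (sub_add_cancel 1 l)
  have hopt := hmin (hh.1 hp hu (sub_nonneg.2 hl1) hl0.le (sub_add_cancel 1 l))
  simp only [mem_ofPred_eq, hcomb, add_sub_cancel_right, norm_add_sq_real, inner_smul_right,
    norm_smul, mul_pow, Real.norm_of_nonneg hl0.le, smul_eq_mul] at hconv hopt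
  have hscaled : l * h p ≤ l * (h u + ⟪p - y, u - p⟫ + l * (‖u - p‖ ^ 2 / 2)) := by linarith
  exact le_of_mul_le_mul_left hscaled hl0

end Prox

section EReal

variable {E : Type*} [AddCommGroup E] [Module ℝ E] {g : E → EReal}

theorem convexOn_toReal_setOf_ne_top (hbot : ∀ x, g x ≠ ⊥)
    (hconv : ∀ x y, ∀ a b : ℝ, 0 ≤ a → 0 ≤ b → a + b = 1 →
      g (a • x + b • y) ≤ (a : EReal) * g x + (b : EReal) * g y) :
    ConvexOn ℝ {x | g x ≠ ⊤} (fun x => (g x).toReal) := by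
  have hcomb : ∀ x, g x ≠ ⊤ → ∀ y, g y ≠ ⊤ → ∀ a b : ℝ, 0 ≤ a → 0 ≤ b → a + b = 1 →
      g (a • x + b • y) ≤ ((a * (g x).toReal + b * (g y).toReal : ℝ) : EReal) := by
    intro x hx y hy a b ha hb hab
    have := hconv x y a b ha hb hab
    rw [← EReal.coe_toReal hx (hbot x), ← EReal.coe_toReal hy (hbot y)] at this
    exact_mod_cast this
  refine ⟨fun x hx y hy a b ha hb hab => ((hcomb x hx y hy a b ha hb hab).trans_lt
    (EReal.coe_lt_top _)).ne, fun x hx y hy a b ha hb hab => ?_⟩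
  have := EReal.toReal_le_toReal (hcomb x hx y hy a b ha hb hab) (hbot _) (EReal.coe_ne_top _)
  rwa [EReal.toReal_coe] at this

theorem EReal.coe_mul_add_coe_of_ne_top {x : EReal} (hx : x ≠ ⊤) (hx' : x ≠ ⊥) (t s : ℝ) :
    (t : EReal) * x + s = ((t * x.toReal + s : ℝ) : EReal) := by
  rw [← EReal.coe_toReal hx hx']
  norm_cast

end EReal

section ProxGradient

variable {E : Type*} [NormedAddCommGroup E] [InnerProductSpace ℝ E] [CompleteSpace E]
  {f : E → ℝ} {f' : E → E} {G : E → ℝ}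

theorem ConvexOn.add_le_add_of_proxGrad_step (hf : ConvexOn ℝ univ f)
    (hf' : ∀ x, HasGradientAt f (f' x) x) {L t : ℝ} (hL : ∀ x y, ‖f' x - f' y‖ ≤ L * ‖x - y‖)
    (ht : 0 < t) (hLt : L * t ≤ 1) {x p u : E}
    (hprox : t * G p ≤ t * G u + ⟪p - (x - t • f' x), u - p⟫) :
    f p + G p ≤ f u + G u + (1 / t * ⟪x - p, x - u⟫ - 1 / (2 * t) * ‖x - p‖ ^ 2) := by
  have hdescent := le_add_inner_gradient_add_sq_of_lipschitz hf' hL x p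
  have htangent := hf.add_inner_gradient_le (hf' x) u
  have hprox_split : ⟪p - (x - t • f' x), u - p⟫
      = ⟪p - x, u - p⟫ + t * (⟪f' x, u - x⟫ - ⟪f' x, p - x⟫) := by
    simp only [inner_sub_left, inner_sub_right, real_inner_smul_left]; ring
  have hxu : ⟪x - p, x - u⟫ = ‖x - p‖ ^ 2 + ⟪p - x, u - p⟫ := by
    rw [← real_inner_self_eq_norm_sq]
    simp only [inner_sub_left, inner_sub_right, real_inner_comm]; ring
  rw [norm_sub_rev p x] at hdescent
  rw [hprox_split] at hprox
  have hLN : t * (L / 2 * ‖x - p‖ ^ 2) ≤ ‖x - p‖ ^ 2 / 2 := by nlinarith [sq_nonneg ‖x - p‖]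
  have key : t * (f p + G p) ≤ t * (f u + G u + (1 / t * ⟪x - p, x - u⟫
      - 1 / (2 * t) * ‖x - p‖ ^ 2)) := by
    rw [hxu]
    field_simp
    linarith [mul_le_mul_of_nonneg_left hdescent ht.le, mul_le_mul_of_nonneg_left htangent ht.le]
  exact le_of_mul_le_mul_left key ht

end ProxGradient

theorem stmt_12_general (n : ℕ) (f : EuclideanSpace ℝ (Fin n) → ℝ)
    (gradf : EuclideanSpace ℝ (Fin n) → EuclideanSpace ℝ (Fin n))
    (g : EuclideanSpace ℝ (Fin n) → EReal)
    (Lf t : ℝ)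
    (hfconv : ConvexOn ℝ Set.univ f)
    (hgrad : ∀ x, HasGradientAt f (gradf x) x)
    (hflip : ∀ x y, ‖gradf x - gradf y‖ ≤ Lf * ‖x - y‖)
    (hgproper : (∀ x, g x ≠ ⊥) ∧ ∃ x, g x ≠ ⊤)
    (hgconv : ∀ x y, ∀ a b : ℝ, 0 ≤ a → 0 ≤ b → a + b = 1 →
      g (a • x + b • y) ≤ (a : EReal) * g x + (b : EReal) * g y)
    (ht : t ∈ Set.Ioc (0 : ℝ) (1 / Lf))
    (x xp : EuclideanSpace ℝ (Fin n))
    -- xp = prox_{tg}(x - t∇f(x)):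
    (hxp : ∀ u, (t : EReal) * g xp + ((‖xp - (x - t • gradf x)‖ ^ 2 / 2 : ℝ) : EReal)
      ≤ (t : EReal) * g u + ((‖u - (x - t • gradf x)‖ ^ 2 / 2 : ℝ) : EReal)) :
    ∀ u, (f xp : EReal) + g xp ≤ ((f u : EReal) + g u) +
      (((1 / t) * inner ℝ (x - xp) (x - u) - 1 / (2 * t) * ‖x - xp‖ ^ 2 : ℝ) : EReal) := by
  obtain ⟨hbot, x₀, hx₀⟩ := hgproper
  obtain ⟨ht0, htL⟩ := ht
  have hLt : Lf * t ≤ 1 := by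
    rwa [le_div_iff₀ (one_div_pos.1 (ht0.trans_le htL)), mul_comm] at htL
  have hxp_dom : g xp ≠ ⊤ := by
    intro htop
    have := hxp x₀
    rw [htop, EReal.coe_mul_top_of_pos ht0, EReal.top_add_coe, top_le_iff,
      EReal.coe_mul_add_coe_of_ne_top hx₀ (hbot x₀)] at this
    exact EReal.coe_ne_top _ this
  have hmin : IsMinOn (fun z => t * (g z).toReal + ‖z - (x - t • gradf x)‖ ^ 2 / 2)
      {z | g z ≠ ⊤} xp := fun z hz => by
    have := hxp z
    rwa [EReal.coe_mul_add_coe_of_ne_top hxp_dom (hbot xp),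
      EReal.coe_mul_add_coe_of_ne_top hz (hbot z), EReal.coe_le_coe_iff] at this
  intro u
  rcases eq_or_ne (g u) ⊤ with hu | hu
  · rw [hu, EReal.coe_add_top, EReal.top_add_coe]
    exact le_top
  have hprox := ((convexOn_toReal_setOf_ne_top hbot hgconv).smul ht0.le).le_add_inner_of_isMinOn
    hxp_dom hmin hu
  have := hfconv.add_le_add_of_proxGrad_step (G := fun z => (g z).toReal) hgrad hflip ht0 hLt hprox
  rw [← EReal.coe_toReal hxp_dom (hbot xp), ← EReal.coe_toReal hu (hbot u)]
  exact_mod_cast this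

theorem stmt_12 (n : ℕ) (f : EuclideanSpace ℝ (Fin n) → ℝ)
    (gradf : EuclideanSpace ℝ (Fin n) → EuclideanSpace ℝ (Fin n))
    (g : EuclideanSpace ℝ (Fin n) → EReal)
    (Lf t : ℝ) (hLf : 0 < Lf)
    (hfconv : ConvexOn ℝ Set.univ f)
    (hgrad : ∀ x, HasGradientAt f (gradf x) x)
    (hflip : ∀ x y, ‖gradf x - gradf y‖ ≤ Lf * ‖x - y‖)
    (hgproper : (∀ x, g x ≠ ⊥) ∧ ∃ x, g x ≠ ⊤)
    (hglsc : LowerSemicontinuous g)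
    (hgconv : ∀ x y, ∀ a b : ℝ, 0 ≤ a → 0 ≤ b → a + b = 1 →
      g (a • x + b • y) ≤ (a : EReal) * g x + (b : EReal) * g y)
    (ht : t ∈ Set.Ioc (0 : ℝ) (1 / Lf))
    (x xp : EuclideanSpace ℝ (Fin n))
    -- xp = prox_{tg}(x - t∇f(x)):
    (hxp : ∀ u, (t : EReal) * g xp + ((‖xp - (x - t • gradf x)‖ ^ 2 / 2 : ℝ) : EReal)
      ≤ (t : EReal) * g u + ((‖u - (x - t • gradf x)‖ ^ 2 / 2 : ℝ) : EReal)) :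
    ∀ u, (f xp : EReal) + g xp ≤ ((f u : EReal) + g u) +
      (((1 / t) * inner ℝ (x - xp) (x - u) - 1 / (2 * t) * ‖x - xp‖ ^ 2 : ℝ) : EReal) :=
  stmt_12_general n f gradf g Lf t hfconv hgrad hflip hgproper hgconv ht x xp hxp
end

section
/- Let $\Omega \subseteq \mathbb{R}^n$ be nonempty closed convex and suppose the sequence $\{x^k\}$ is Fejér monotone with respect to $\Omega$ (i.e., $\|x^{k+1} - x\| \le \|x^k - x\|$ for all $x \in \Omega$ and all $k$) and converges in norm to some $x \in \Omega$. Then $\|x^k - x\| \le 2\, d(x^k, \Omega)$ for all $k$. -/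
open Filter

/-!
Fejér monotonicity makes `k ↦ d(xᵏ, z)` nonincreasing for every `z ∈ Ω`, so the limit `p`
satisfies `d(p, z) ≤ d(xᵏ, z)`. The triangle inequality through any `z ∈ Ω` then gives
`d(xᵏ, p) ≤ d(xᵏ, z) + d(z, p) ≤ 2 d(xᵏ, z)`.
-/

section FejerMonotone

variable {α : Type*} [PseudoMetricSpace α]

def FejerMonotone (x : ℕ → α) (s : Set α) : Prop :=
  ∀ k, ∀ z ∈ s, dist (x (k + 1)) z ≤ dist (x k) z

theorem FejerMonotone.antitone_dist {x : ℕ → α} {s : Set α} (hx : FejerMonotone x s)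
    {z : α} (hz : z ∈ s) : Antitone fun k => dist (x k) z :=
  antitone_nat_of_succ_le fun k => hx k z hz

theorem FejerMonotone.dist_lim_le {x : ℕ → α} {s : Set α} (hx : FejerMonotone x s) {p : α}
    (hlim : Tendsto x atTop (nhds p)) (k : ℕ) {z : α} (hz : z ∈ s) :
    dist p z ≤ dist (x k) z :=
  (hx.antitone_dist hz).le_of_tendsto (hlim.dist tendsto_const_nhds) k

theorem dist_le_two_mul_infDist {s : Set α} {p y : α} (hp : p ∈ s)
    (hclosest : ∀ z ∈ s, dist p z ≤ dist y z) : dist y p ≤ 2 * Metric.infDist y s := by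
  have hhalf : dist y p / 2 ≤ Metric.infDist y s := by
    refine (Metric.le_infDist ⟨p, hp⟩).2 fun z hz => ?_
    have := dist_triangle_right y p z
    linarith [hclosest z hz]
  linarith

theorem FejerMonotone.dist_lim_le_two_mul_infDist {x : ℕ → α} {s : Set α}
    (hx : FejerMonotone x s) {p : α} (hp : p ∈ s) (hlim : Tendsto x atTop (nhds p)) (k : ℕ) :
    dist (x k) p ≤ 2 * Metric.infDist (x k) s :=
  dist_le_two_mul_infDist hp fun _ hz => hx.dist_lim_le hlim k hz

end FejerMonotone

theorem stmt_13_general (n : ℕ) (Ω : Set (EuclideanSpace ℝ (Fin n)))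
    (x : ℕ → EuclideanSpace ℝ (Fin n)) (p : EuclideanSpace ℝ (Fin n))
    (hfejer : ∀ k, ∀ z ∈ Ω, ‖x (k + 1) - z‖ ≤ ‖x k - z‖)
    (hp : p ∈ Ω) (hlim : Tendsto x atTop (nhds p)) :
    ∀ k, ‖x k - p‖ ≤ 2 * Metric.infDist (x k) Ω := by
  have hx : FejerMonotone x Ω := by simpa only [FejerMonotone, dist_eq_norm] using hfejer
  intro k
  simpa only [dist_eq_norm] using hx.dist_lim_le_two_mul_infDist hp hlim k

theorem stmt_13 (n : ℕ) (Ω : Set (EuclideanSpace ℝ (Fin n)))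
    (hne : Ω.Nonempty) (hcl : IsClosed Ω) (hconv : Convex ℝ Ω)
    (x : ℕ → EuclideanSpace ℝ (Fin n)) (p : EuclideanSpace ℝ (Fin n))
    (hfejer : ∀ k, ∀ z ∈ Ω, ‖x (k + 1) - z‖ ≤ ‖x k - z‖)
    (hp : p ∈ Ω) (hlim : Tendsto x atTop (nhds p)) :
    ∀ k, ‖x k - p‖ ≤ 2 * Metric.infDist (x k) Ω :=
  stmt_13_general n Ω x p hfejer hp hlim
end

section
/- Let $\Omega \subseteq \mathbb{R}^n$ be nonempty closed convex, let $\{x^k\}$ be Fejér monotone with respect to a superset $\mathrm{Fix}(W) \supseteq \Omega$ (for all $x\in \mathrm{Fix}(W)$, $\|x^{k+1}-x\| \le \|x^k - x\|$), and suppose there exist $\gamma > \beta > 0$, $q \in \mathbb{N}$, $\lambda > 0$ with $d^\beta(x^{(k+1)q}, \Omega) \le d^\beta(x^{kq}, \Omega) - \lambda d^\gamma(x^{kq}, \Omega)$ for all $k$. Then $d(x^{kq}, \Omega) \le C k^{-1/(\gamma - \beta)}$ for all $k \ge 1$, where $C = \left(\frac{\beta}{(\gamma-\beta)\lambda}\right)^{1/(\gamma-\beta)}$.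 -/
/-!
Set `θₖ = d(x^{kq}, Ω)^β` and `p = (γ - β)/β`. Since `d^γ = d^β · (d^β)^p`, the hypothesis reads
`θₖ₊₁ ≤ θₖ (1 - λ θₖ^p)`. By Bernoulli's inequality `(1 - u)^{-p} ≥ 1 + p u`, each step raises
`θ^{-p}` by at least `p λ`, so `θₖ^{-p} ≥ p λ k` and `θₖ ≤ (p λ k)^{-1/p}`; taking `1/β`-th powers
gives the rate `k^{-1/(γ-β)}`.
-/

open Real

namespace Real

/-- Bernoulli's inequality `(1 - u)^{-p} ≥ 1 + p u`, with the power cleared. -/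
theorem one_add_mul_mul_one_sub_rpow_le_one {p u : ℝ} (hp : 0 ≤ p) (hu : u ≤ 1) :
    (1 + p * u) * (1 - u) ^ p ≤ 1 := by
  have hexp : (1 - u) ^ p ≤ exp (-(p * u)) := by
    calc (1 - u) ^ p ≤ exp (-u) ^ p := by
          gcongr
          linarith [add_one_le_exp (-u)]
      _ = exp (-(p * u)) := by rw [← exp_mul]; ring_nf
  calc (1 + p * u) * (1 - u) ^ p ≤ exp (p * u) * exp (-(p * u)) :=
        mul_le_mul (by linarith [add_one_le_exp (p * u)]) hexp (by bound) (exp_pos _).le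
    _ = 1 := by rw [← exp_add, add_neg_cancel, exp_zero]

theorem rpow_neg_add_mul_le_of_le_mul_one_sub {p lam a b : ℝ} (hp : 0 ≤ p) (ha : 0 < a)
    (hb : 0 < b) (hab : b ≤ a * (1 - lam * a ^ p)) :
    a ^ (-p) + p * lam ≤ b ^ (-p) := by
  set u := lam * a ^ p
  have hu : 0 < 1 - u := pos_of_mul_pos_right (hb.trans_le hab) ha.le
  have hbern : 1 + p * u ≤ (1 - u) ^ (-p) := by
    rw [rpow_neg hu.le, ← one_div, le_div_iff₀ (rpow_pos_of_pos hu p)]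
    exact one_add_mul_mul_one_sub_rpow_le_one hp (by linarith)
  have hcancel : a ^ (-p) * a ^ p = 1 := by
    rw [← rpow_add ha, neg_add_cancel, rpow_zero]
  calc a ^ (-p) + p * lam = a ^ (-p) * (1 + p * u) := by
        linear_combination (-(p * lam)) * hcancel
    _ ≤ a ^ (-p) * (1 - u) ^ (-p) := by gcongr
    _ = (a * (1 - u)) ^ (-p) := (mul_rpow ha.le hu.le).symm
    _ ≤ b ^ (-p) := rpow_le_rpow_of_nonpos hb hab (by linarith)

end Real

section DescentRate

variable {p lam : ℝ} {θ : ℕ → ℝ}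

theorem rpow_neg_add_mul_le_of_forall_le_mul_one_sub (hp : 0 ≤ p) (hθ : ∀ k, 0 ≤ θ k)
    (hstep : ∀ k, θ (k + 1) ≤ θ k * (1 - lam * θ k ^ p)) (k : ℕ) (hk : 0 < θ k) :
    θ 0 ^ (-p) + p * lam * k ≤ θ k ^ (-p) := by
  induction k with
  | zero => simp
  | succ k ih =>
    have hk' : 0 < θ k := (hθ k).lt_of_ne' fun h0 => by
      have := hstep k
      rw [h0, zero_mul] at this
      linarith
    calc θ 0 ^ (-p) + p * lam * ↑(k + 1) = (θ 0 ^ (-p) + p * lam * k) + p * lam := by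
          push_cast; ring
      _ ≤ θ k ^ (-p) + p * lam := by gcongr; exact ih hk'
      _ ≤ θ (k + 1) ^ (-p) := rpow_neg_add_mul_le_of_le_mul_one_sub hp hk' hk (hstep k)

theorem le_rpow_of_forall_le_mul_one_sub (hp : 0 < p) (hlam : 0 < lam) (hθ : ∀ k, 0 ≤ θ k)
    (hstep : ∀ k, θ (k + 1) ≤ θ k * (1 - lam * θ k ^ p)) {k : ℕ} (hk : 1 ≤ k) :
    θ k ≤ (p * lam * k) ^ (-1 / p) := by
  have hk₀ : (0 : ℝ) < k := by exact_mod_cast hk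
  rcases (hθ k).eq_or_lt with h0 | hpos
  · rw [← h0]
    positivity
  have hgrowth : p * lam * k ≤ θ k ^ (-p) := by
    linarith [rpow_neg_add_mul_le_of_forall_le_mul_one_sub hp.le hθ hstep k hpos,
      rpow_nonneg (hθ 0) (-p)]
  rw [show -1 / p = (-p)⁻¹ by rw [inv_neg, neg_div, one_div]]
  exact (le_rpow_inv_iff_of_neg hpos (by positivity) (by linarith)).2 hgrowth

end DescentRate

theorem le_mul_rpow_of_forall_rpow_le_rpow_sub_mul_rpow {β γ lam : ℝ} {d : ℕ → ℝ}
    (hd : ∀ k, 0 ≤ d k) (hβ : 0 < β) (hγβ : β < γ) (hlam : 0 < lam)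
    (hrec : ∀ k, d (k + 1) ^ β ≤ d k ^ β - lam * d k ^ γ) {k : ℕ} (hk : 1 ≤ k) :
    d k ≤ (β / ((γ - β) * lam)) ^ ((1 : ℝ) / (γ - β)) * (k : ℝ) ^ (-(1 : ℝ) / (γ - β)) := by
  obtain ⟨p, hp_def⟩ : ∃ p, p = (γ - β) / β := ⟨_, rfl⟩
  have hp : 0 < p := hp_def ▸ div_pos (by linarith) hβ
  have hβp : β * p = γ - β := by rw [hp_def]; field_simp
  have hk₀ : (0 : ℝ) < k := by exact_mod_cast hk
  have hsplit : ∀ k, d k ^ γ = d k ^ β * (d k ^ β) ^ p := fun k => by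
    rw [← rpow_mul (hd k), ← rpow_add' (hd k) (by linarith), hβp, add_sub_cancel]
  have hθ : d k ^ β ≤ (p * lam * k) ^ (-1 / p) := by
    refine le_rpow_of_forall_le_mul_one_sub hp hlam (fun k => rpow_nonneg (hd k) β)
      (fun k => ?_) hk
    linear_combination hrec k - lam * hsplit k
  calc d k = (d k ^ β) ^ (1 / β) := by rw [← rpow_mul (hd k), mul_one_div_cancel hβ.ne', rpow_one]
    _ ≤ ((p * lam * k) ^ (-1 / p)) ^ (1 / β) := by gcongr; exact rpow_nonneg (hd k) β
    _ = (p * lam) ^ (-1 / (γ - β)) * (k : ℝ) ^ (-1 / (γ - β)) := by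
      rw [← rpow_mul (by positivity), mul_rpow (by positivity) hk₀.le, ← hβp]
      congr 2 <;> ring
    _ = (β / ((γ - β) * lam)) ^ (1 / (γ - β)) * (k : ℝ) ^ (-1 / (γ - β)) := by
      rw [neg_div, rpow_neg (by positivity), ← inv_rpow (by positivity), hp_def]
      congr 2
      field_simp

theorem stmt_19_general (n : ℕ) (Ω : Set (EuclideanSpace ℝ (Fin n)))
    (x : ℕ → EuclideanSpace ℝ (Fin n))
    (γ β lam : ℝ) (q : ℕ) (hβ : 0 < β) (hγβ : β < γ) (hlam : 0 < lam)
    (hrec : ∀ k : ℕ, Metric.infDist (x ((k + 1) * q)) Ω ^ β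
      ≤ Metric.infDist (x (k * q)) Ω ^ β - lam * Metric.infDist (x (k * q)) Ω ^ γ) :
    ∀ k : ℕ, 1 ≤ k → Metric.infDist (x (k * q)) Ω
      ≤ (β / ((γ - β) * lam)) ^ ((1 : ℝ) / (γ - β)) * (k : ℝ) ^ (-(1 : ℝ) / (γ - β)) :=
  fun _ hk => le_mul_rpow_of_forall_rpow_le_rpow_sub_mul_rpow
    (d := fun k => Metric.infDist (x (k * q)) Ω) (fun _ => Metric.infDist_nonneg)
    hβ hγβ hlam hrec hk

theorem stmt_19 (n : ℕ) (Ω FixW : Set (EuclideanSpace ℝ (Fin n)))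
    (hne : Ω.Nonempty) (hcl : IsClosed Ω) (hconv : Convex ℝ Ω)
    (hsub : Ω ⊆ FixW)
    (x : ℕ → EuclideanSpace ℝ (Fin n))
    (hfejer : ∀ k, ∀ z ∈ FixW, ‖x (k + 1) - z‖ ≤ ‖x k - z‖)
    (γ β lam : ℝ) (q : ℕ) (hβ : 0 < β) (hγβ : β < γ) (hlam : 0 < lam)
    (hrec : ∀ k : ℕ, Metric.infDist (x ((k + 1) * q)) Ω ^ β
      ≤ Metric.infDist (x (k * q)) Ω ^ β - lam * Metric.infDist (x (k * q)) Ω ^ γ) :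
    ∀ k : ℕ, 1 ≤ k → Metric.infDist (x (k * q)) Ω
      ≤ (β / ((γ - β) * lam)) ^ ((1 : ℝ) / (γ - β)) * (k : ℝ) ^ (-(1 : ℝ) / (γ - β)) :=
  stmt_19_general n Ω x γ β lam q hβ hγβ hlam hrec
end
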